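/- If ρ' is a sub-normalised positive operator with purified distance P(ρ,ρ') ≤ ε from a state ρ and ρ' ≤ 2^λ σ for a state σ, then the normalised state ρ̃ = ρ'/Tr ρ' satisfies (1/2)‖ρ − ρ̃‖₁ ≤ ε and ρ̃ ≤ 2^{λ + log₂(1/(1−ε))} σ. -/

import Mathlib

/-!
Normalising `ρ'` to `τ = ρ' / Tr ρ'` multiplies its fidelity with `ρ` by `1 / √(Tr ρ') ≥ 1`, so the
trace-distance bound follows from the Fuchs–van de Graaf inequality
`‖ρ - τ‖₁ ≤ 2 √(1 - F(ρ, τ)²)` for states. For that, write `ρ = A Aᴴ` and `τ = B Bᴴ` with `A = √ρ`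
and `B = √τ W*`, where `W` is the polar part of `√ρ √τ`, so that `Tr (Aᴴ B) = F(ρ, τ)`. Then
`2 (ρ - τ) = (A - B)(A + B)ᴴ + (A + B)(A - B)ᴴ`, and Cauchy–Schwarz for the Hilbert–Schmidt inner
product bounds its trace norm by `2 √(2 - 2F) √(2 + 2F)`.
The same Cauchy–Schwarz gives `F(ρ, ρ')² ≤ Tr ρ'`, hence `Tr ρ' ≥ 1 - ε`, and then
`τ ≤ 2^λ σ / Tr ρ' ≤ 2^λ σ / (1 - ε)`.
-/


open Matrix BigOperators
open scoped Kronecker ComplexOrder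

noncomputable section

abbrev BOp (d : ℕ) := Matrix (Fin d × Fin d) (Fin d × Fin d) ℂ

/-- Loewner order: `A ≤ B` iff `B - A` is positive semidefinite. -/
def loe {n : Type*} [Fintype n] (A B : Matrix n n ℂ) : Prop := (B - A).PosSemidef

/-- A density operator: positive semidefinite with unit trace. -/
def IsState {n : Type*} [Fintype n] [DecidableEq n] (ρ : Matrix n n ℂ) : Prop :=
  ρ.PosSemidef ∧ ρ.trace = 1

/-- Separable bipartite state (convex combination of product states). -/
def IsSep {a b : Type*} [Fintype a] [DecidableEq a] [Fintype b] [DecidableEq b]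
    (ρ : Matrix (a × b) (a × b) ℂ) : Prop :=
  ∃ (m : ℕ) (p : Fin m → ℝ) (A : Fin m → Matrix a a ℂ) (B : Fin m → Matrix b b ℂ),
    (∀ i, 0 ≤ p i) ∧ (∑ i, p i) = 1 ∧
    (∀ i, IsState (A i)) ∧ (∀ i, IsState (B i)) ∧
    ρ = ∑ i, ((p i : ℝ) : ℂ) • (A i ⊗ₖ B i)

/-- The cone generated by separable states. -/
def InSepCone {a b : Type*} [Fintype a] [DecidableEq a] [Fintype b] [DecidableEq b]
    (S : Matrix (a × b) (a × b) ℂ) : Prop :=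
  ∃ (c : ℝ) (σ : Matrix (a × b) (a × b) ℂ), 0 ≤ c ∧ IsSep σ ∧ S = ((c : ℝ) : ℂ) • σ

/-- Maximally entangled state `Φ_d` on `ℂ^d ⊗ ℂ^d`. -/
def PhiME (d : ℕ) : BOp d := fun p q => if p.1 = p.2 ∧ q.1 = q.2 then ((1 : ℂ) / d) else 0

/-- `τ_d = (𝟙 - Φ_d)/(d² - 1)`. -/
def tauME (d : ℕ) : BOp d := (((d : ℂ)^2 - 1))⁻¹ • (1 - PhiME d)

/-- Partial transpose on the second tensor factor. -/
def pt {a b : Type*} (A : Matrix (a × b) (a × b) ℂ) : Matrix (a × b) (a × b) ℂ :=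
  fun p q => A (p.1, q.2) (q.1, p.2)

/-- Total positive-semidefinite square root (junk value `0` off the PSD cone). -/
noncomputable def msqrt {n : Type*} [Fintype n] [DecidableEq n] (A : Matrix n n ℂ) :
    Matrix n n ℂ :=
  open scoped Classical in
  if h : A.PosSemidef then (h.1.eigenvectorUnitary : Matrix n n ℂ) *
    diagonal ((↑) ∘ Real.sqrt ∘ h.1.eigenvalues) * (star h.1.eigenvectorUnitary : Matrix n n ℂ)
    else 0

/-- Trace norm `‖A‖₁ = Tr √(AᴴA)`. -/
noncomputable def traceNorm {n : Type*} [Fintype n] [DecidableEq n] (A : Matrix n n ℂ) : ℝ :=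
  (msqrt (Aᴴ * A)).trace.re


/-- Generalised (Uhlmann) fidelity for sub-normalised positive operators. -/
noncomputable def gFid {n : Type*} [Fintype n] [DecidableEq n] (ρ σ : Matrix n n ℂ) : ℝ :=
  (traceNorm (msqrt ρ * msqrt σ) + Real.sqrt ((1 - ρ.trace.re) * (1 - σ.trace.re))) ^ 2

/-- Purified distance. -/
noncomputable def pDist {n : Type*} [Fintype n] [DecidableEq n] (ρ σ : Matrix n n ℂ) : ℝ :=
  Real.sqrt (1 - gFid ρ σ)

/-- Generalised trace distance. -/
noncomputable def gTDist {n : Type*} [Fintype n] [DecidableEq n] (ρ σ : Matrix n n ℂ) : ℝ :=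
  traceNorm (ρ - σ) / 2 + |ρ.trace.re - σ.trace.re| / 2


namespace Matrix
open scoped InnerProductSpace MatrixOrder

section

variable {m n : Type*} [Fintype m] [Fintype n]

lemma PosSemidef.trace_re_nonneg {A : Matrix n n ℂ} (hA : A.PosSemidef) : 0 ≤ A.trace.re :=
  (Complex.nonneg_iff.mp hA.trace_nonneg).1

lemma PosSemidef.ofReal_trace_re {A : Matrix n n ℂ} (hA : A.PosSemidef) :
    (A.trace.re : ℂ) = A.trace :=
  Complex.ext rfl (Complex.nonneg_iff.mp hA.trace_nonneg).2

lemma norm_trace_mul_le (X : Matrix m n ℂ) (Y : Matrix n m ℂ) :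
    ‖(X * Y).trace‖ ≤ √(Xᴴ * X).trace.re * √(Y * Yᴴ).trace.re := by
  let x : EuclideanSpace ℂ (m × n) := WithLp.toLp 2 fun p => star (X p.1 p.2)
  let y : EuclideanSpace ℂ (m × n) := WithLp.toLp 2 fun p => Y p.2 p.1
  have hxy : (X * Y).trace = ⟪x, y⟫_ℂ := by
    simp [x, y, trace, mul_apply, PiLp.inner_apply, Fintype.sum_prod_type, mul_comm]
  have hx : ‖x‖ = √(Xᴴ * X).trace.re := by
    simp [x, EuclideanSpace.norm_eq, trace, mul_apply, Fintype.sum_prod_type, Complex.sq_norm,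
      Complex.normSq_apply, Finset.sum_comm (γ := m)]
  have hy : ‖y‖ = √(Y * Yᴴ).trace.re := by
    simp [y, EuclideanSpace.norm_eq, trace, mul_apply, Fintype.sum_prod_type, Complex.sq_norm,
      Complex.normSq_apply, Finset.sum_comm (γ := m)]
  rw [hxy, ← hx, ← hy]
  exact norm_inner_le_norm x y

lemma re_trace_conjTranspose_mul_comm (A B : Matrix m n ℂ) :
    (Bᴴ * A).trace.re = (Aᴴ * B).trace.re := by
  rw [← conjTranspose_conjTranspose A, ← conjTranspose_mul, trace_conjTranspose,
    conjTranspose_conjTranspose, Complex.star_def, Complex.conj_re]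

lemma re_trace_conjTranspose_add_mul_add (A B : Matrix m n ℂ) :
    ((A + B)ᴴ * (A + B)).trace.re =
      (Aᴴ * A).trace.re + (Bᴴ * B).trace.re + 2 * (Aᴴ * B).trace.re := by
  rw [conjTranspose_add, Matrix.add_mul, Matrix.mul_add, Matrix.mul_add]
  simp only [trace_add, Complex.add_re, re_trace_conjTranspose_mul_comm A B]
  ring

lemma re_trace_conjTranspose_sub_mul_sub (A B : Matrix m n ℂ) :
    ((A - B)ᴴ * (A - B)).trace.re =
      (Aᴴ * A).trace.re + (Bᴴ * B).trace.re - 2 * (Aᴴ * B).trace.re := by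
  rw [conjTranspose_sub, Matrix.sub_mul, Matrix.mul_sub, Matrix.mul_sub]
  simp only [trace_sub, Complex.sub_re, re_trace_conjTranspose_mul_comm A B]
  ring

end

variable {n : Type*} [Fintype n] [DecidableEq n]

lemma trace_eq_sum_inner {ι : Type*} [Fintype ι] (N : Matrix n n ℂ)
    (b : OrthonormalBasis ι ℂ (EuclideanSpace ℂ n)) :
    N.trace = ∑ i, ⟪b i, toLpLin 2 2 N (b i)⟫_ℂ := by
  rw [← LinearMap.trace_eq_sum_inner (toLpLin 2 2 N) b, toLpLin_eq_toLin,
    LinearMap.trace_eq_matrix_trace ℂ (PiLp.basisFun 2 ℂ n), LinearMap.toMatrix_toLin]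

lemma inner_toLpLin_toLpLin (N M : Matrix n n ℂ) (x y : EuclideanSpace ℂ n) :
    ⟪toLpLin 2 2 N x, toLpLin 2 2 M y⟫_ℂ = ⟪x, toLpLin 2 2 (Nᴴ * M) y⟫_ℂ := by
  simp only [EuclideanSpace.inner_eq_star_dotProduct, ofLp_toLpLin, toLin'_apply, star_mulVec,
    ← mulVec_mulVec]
  rw [dotProduct_comm (Nᴴ *ᵥ _), dotProduct_mulVec, dotProduct_comm]

lemma exists_unitary_toLpLin_eq (v b : OrthonormalBasis n ℂ (EuclideanSpace ℂ n)) :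
    ∃ V ∈ unitaryGroup n ℂ, ∀ i, toLpLin 2 2 V (v i) = b i := by
  let B (x : OrthonormalBasis n ℂ (EuclideanSpace ℂ n)) : Matrix n n ℂ :=
    (EuclideanSpace.basisFun n ℂ).toBasis.toMatrix x.toBasis
  have hB x : B x ∈ unitaryGroup n ℂ :=
    (EuclideanSpace.basisFun n ℂ).toMatrix_orthonormalBasis_mem_unitary x
  have hcol x i : B x *ᵥ Pi.single i 1 = x i := by
    rw [mulVec_single_one]; rfl
  refine ⟨B b * star (B v), Submonoid.mul_mem _ (hB b) (Unitary.star_mem (hB v)), fun i => ?_⟩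
  ext : 1
  rw [ofLp_toLpLin, toLin'_apply, ← hcol v i, mulVec_mulVec, mul_assoc,
    (mem_unitaryGroup_iff').mp (hB v), mul_one, hcol]

section

variable (M : Matrix n n ℂ)

abbrev rightSingularBasis : OrthonormalBasis n ℂ (EuclideanSpace ℂ n) :=
  (isHermitian_conjTranspose_mul_self M).eigenvectorBasis

def singularValues (i : n) : ℝ := √((isHermitian_conjTranspose_mul_self M).eigenvalues i)

lemma singularValues_nonneg (i : n) : 0 ≤ M.singularValues i := Real.sqrt_nonneg _

lemma sq_singularValues (i : n) :
    M.singularValues i ^ 2 = (isHermitian_conjTranspose_mul_self M).eigenvalues i :=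
  Real.sq_sqrt ((posSemidef_conjTranspose_mul_self M).eigenvalues_nonneg i)

lemma inner_toLpLin_rightSingularBasis (i j : n) :
    ⟪toLpLin 2 2 M (M.rightSingularBasis i), toLpLin 2 2 M (M.rightSingularBasis j)⟫_ℂ =
      if i = j then (M.singularValues i : ℂ) ^ 2 else 0 := by
  have hM := isHermitian_conjTranspose_mul_self M
  have heig : toLpLin 2 2 (Mᴴ * M) (M.rightSingularBasis j) =
      (hM.eigenvalues j : ℂ) • M.rightSingularBasis j := by
    ext : 1
    rw [ofLp_toLpLin, toLin'_apply, hM.mulVec_eigenvectorBasis j, WithLp.ofLp_smul,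
      RCLike.real_smul_eq_coe_smul (K := ℂ)]
    rfl
  rw [inner_toLpLin_toLpLin, heig, inner_smul_right,
    orthonormal_iff_ite.mp M.rightSingularBasis.orthonormal]
  split_ifs with h
  · subst h; simp [← sq_singularValues]
  · simp

lemma norm_toLpLin_rightSingularBasis (i : n) :
    ‖toLpLin 2 2 M (M.rightSingularBasis i)‖ = M.singularValues i := by
  have h := M.inner_toLpLin_rightSingularBasis i i
  rw [if_pos rfl, inner_self_eq_norm_sq_to_K] at h
  exact (pow_left_inj₀ (norm_nonneg _) (M.singularValues_nonneg i) two_ne_zero).mp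
    (Complex.ofReal_injective (by push_cast; exact h))

lemma traceNorm_eq_sum_singularValues : traceNorm M = ∑ i, M.singularValues i := by
  have hM := posSemidef_conjTranspose_mul_self M
  rw [traceNorm, msqrt, dif_pos hM, trace_mul_cycle, Unitary.coe_star_mul_self, one_mul,
    trace_diagonal, Complex.re_sum]
  rfl

lemma traceNorm_nonneg : 0 ≤ traceNorm M := by
  rw [traceNorm_eq_sum_singularValues]
  exact Finset.sum_nonneg fun i _ => M.singularValues_nonneg i

lemma exists_unitary_trace_star_mul_eq_traceNorm :
    ∃ V ∈ unitaryGroup n ℂ, (star V * M).trace = traceNorm M := by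
  -- `V` is the polar part of `M`: it sends each right singular vector `vᵢ` with `σᵢ ≠ 0` to
  -- `M vᵢ / σᵢ`.
  let u i : EuclideanSpace ℂ n :=
    ((M.singularValues i)⁻¹ : ℂ) • toLpLin 2 2 M (M.rightSingularBasis i)
  have hu : Orthonormal ℂ ({i | M.singularValues i ≠ 0}.domRestrict u) := by
    rw [orthonormal_iff_ite]
    rintro ⟨i, hi⟩ ⟨j, hj⟩
    change ⟪u i, u j⟫_ℂ = _
    simp only [u, inner_smul_left, inner_smul_right, M.inner_toLpLin_rightSingularBasis,
      Subtype.mk.injEq]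
    split_ifs with h
    · subst h
      simp only [map_inv₀, Complex.conj_ofReal]
      field_simp [Complex.ofReal_ne_zero.mpr hi]
    · simp
  obtain ⟨b, hb⟩ := hu.exists_orthonormalBasis_extension_of_card_eq finrank_euclideanSpace
  have hMv i : toLpLin 2 2 M (M.rightSingularBasis i) = (M.singularValues i : ℂ) • b i := by
    by_cases hi : M.singularValues i = 0
    · rw [hi, Complex.ofReal_zero, zero_smul, ← norm_eq_zero,
        M.norm_toLpLin_rightSingularBasis]
      exact hi
    · rw [hb i hi, smul_smul, mul_inv_cancel₀ (Complex.ofReal_ne_zero.mpr hi), one_smul]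
  obtain ⟨V, hV, hVv⟩ := exists_unitary_toLpLin_eq M.rightSingularBasis b
  refine ⟨V, hV, ?_⟩
  rw [trace_eq_sum_inner _ M.rightSingularBasis, traceNorm_eq_sum_singularValues,
    Complex.ofReal_sum]
  refine Finset.sum_congr rfl fun i _ => ?_
  rw [star_eq_conjTranspose, ← inner_toLpLin_toLpLin, hVv, hMv, inner_smul_right,
    inner_self_eq_norm_sq_to_K, b.orthonormal.1 i]
  simp

end

lemma PosSemidef.msqrt_eq_cfcSqrt {A : Matrix n n ℂ} (hA : A.PosSemidef) :
    msqrt A = CFC.sqrt A := by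
  rw [msqrt, dif_pos hA, CFC.sqrt_eq_real_sqrt A (nonneg_iff_posSemidef.mpr hA), cfcₙ_eq_cfc,
    hA.1.cfc_eq, IsHermitian.cfc, Unitary.conjStarAlgAut_apply]
  rfl

lemma PosSemidef.posSemidef_msqrt {A : Matrix n n ℂ} (hA : A.PosSemidef) :
    (msqrt A).PosSemidef := by
  rw [hA.msqrt_eq_cfcSqrt]
  exact nonneg_iff_posSemidef.mp (CFC.sqrt_nonneg A)

lemma PosSemidef.msqrt_mul_msqrt {A : Matrix n n ℂ} (hA : A.PosSemidef) :
    msqrt A * msqrt A = A := by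
  rw [hA.msqrt_eq_cfcSqrt]
  exact CFC.sqrt_mul_sqrt_self A (nonneg_iff_posSemidef.mpr hA)

lemma PosSemidef.conjTranspose_msqrt_mul_msqrt {A : Matrix n n ℂ} (hA : A.PosSemidef) :
    (msqrt A)ᴴ * msqrt A = A := by
  rw [hA.posSemidef_msqrt.1, hA.msqrt_mul_msqrt]

lemma PosSemidef.msqrt_real_smul {A : Matrix n n ℂ} (hA : A.PosSemidef) {c : ℝ} (hc : 0 ≤ c) :
    msqrt ((c : ℂ) • A) = (√c : ℂ) • msqrt A := by
  have hcA : ((c : ℂ) • A).PosSemidef := hA.smul (by exact_mod_cast hc)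
  have hcA' : ((√c : ℂ) • msqrt A).PosSemidef :=
    hA.posSemidef_msqrt.smul (by exact_mod_cast Real.sqrt_nonneg c)
  rw [hcA.msqrt_eq_cfcSqrt]
  refine CFC.sqrt_unique ?_ (nonneg_iff_posSemidef.mpr hcA')
  rw [smul_mul_smul_comm, hA.msqrt_mul_msqrt, ← Complex.ofReal_mul,
    Real.mul_self_sqrt hc]

lemma traceNorm_real_smul (M : Matrix n n ℂ) {c : ℝ} (hc : 0 ≤ c) :
    traceNorm ((c : ℂ) • M) = c * traceNorm M := by
  have h : ((c : ℂ) • M)ᴴ * ((c : ℂ) • M) = ((c * c : ℝ) : ℂ) • (Mᴴ * M) := by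
    rw [conjTranspose_smul, smul_mul_smul_comm, Complex.star_def,
      Complex.conj_ofReal, Complex.ofReal_mul]
  rw [traceNorm, h, (posSemidef_conjTranspose_mul_self M).msqrt_real_smul (mul_nonneg hc hc),
    Real.sqrt_mul_self hc, trace_smul, smul_eq_mul, Complex.re_ofReal_mul, traceNorm]

lemma conjTranspose_star_mul_mul_star_mul {m : Type*} {V : Matrix n n ℂ}
    (hV : V ∈ unitaryGroup n ℂ) (X : Matrix n m ℂ) :
    (star V * X)ᴴ * (star V * X) = Xᴴ * X := by
  rw [conjTranspose_mul, ← star_eq_conjTranspose (star V), star_star, Matrix.mul_assoc,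
    ← Matrix.mul_assoc V, (mem_unitaryGroup_iff).mp hV, Matrix.one_mul]

lemma norm_trace_star_mul_mul_le {m : Type*} [Fintype m] {V : Matrix n n ℂ}
    (hV : V ∈ unitaryGroup n ℂ) (X : Matrix n m ℂ) (Y : Matrix m n ℂ) :
    ‖(star V * X * Y).trace‖ ≤ √(Xᴴ * X).trace.re * √(Y * Yᴴ).trace.re := by
  rw [← conjTranspose_star_mul_mul_star_mul hV X]
  exact norm_trace_mul_le _ _

lemma traceNorm_mul_le (X Y : Matrix n n ℂ) :
    traceNorm (X * Y) ≤ √(Xᴴ * X).trace.re * √(Yᴴ * Y).trace.re := by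
  obtain ⟨V, hV, hVXY⟩ := exists_unitary_trace_star_mul_eq_traceNorm (X * Y)
  rw [← Real.norm_of_nonneg (traceNorm_nonneg _), ← Complex.norm_real, ← hVXY, ← mul_assoc,
    trace_mul_comm Yᴴ]
  exact norm_trace_star_mul_mul_le hV X Y

lemma traceNorm_msqrt_mul_msqrt_le {ρ σ : Matrix n n ℂ} (hρ : ρ.PosSemidef)
    (hσ : σ.PosSemidef) :
    traceNorm (msqrt ρ * msqrt σ) ≤ √ρ.trace.re * √σ.trace.re := by
  simpa only [hρ.conjTranspose_msqrt_mul_msqrt, hσ.conjTranspose_msqrt_mul_msqrt] using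
    traceNorm_mul_le (msqrt ρ) (msqrt σ)

lemma traceNorm_mul_conjTranspose_sub_le {A B : Matrix n n ℂ} {r : ℝ}
    (hA : (Aᴴ * A).trace = 1) (hB : (Bᴴ * B).trace = 1) (hAB : (Aᴴ * B).trace = r) :
    traceNorm (A * Aᴴ - B * Bᴴ) ≤ 2 * √(1 - r ^ 2) := by
  have hCD : (A - B) * (A + B)ᴴ + (A + B) * (A - B)ᴴ = (2 : ℂ) • (A * Aᴴ - B * Bᴴ) := by
    rw [two_smul, conjTranspose_add, conjTranspose_sub]
    noncomm_ring
  have hC : ((A - B)ᴴ * (A - B)).trace.re = 2 - 2 * r := by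
    rw [re_trace_conjTranspose_sub_mul_sub, hA, hB, hAB, Complex.one_re, Complex.ofReal_re]
    ring
  have hD : ((A + B)ᴴ * (A + B)).trace.re = 2 + 2 * r := by
    rw [re_trace_conjTranspose_add_mul_add, hA, hB, hAB, Complex.one_re, Complex.ofReal_re]
    ring
  have hsqrt : √(2 - 2 * r) * √(2 + 2 * r) = 2 * √(1 - r ^ 2) := by
    have := (posSemidef_conjTranspose_mul_self (A - B)).trace_re_nonneg
    rw [← Real.sqrt_mul (by linarith),
      show (2 - 2 * r) * (2 + 2 * r) = 2 ^ 2 * (1 - r ^ 2) by ring,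
      Real.sqrt_mul (by norm_num), Real.sqrt_sq two_pos.le]
  obtain ⟨V, hV, hVtr⟩ := exists_unitary_trace_star_mul_eq_traceNorm (A * Aᴴ - B * Bᴴ)
  have h1 := norm_trace_star_mul_mul_le hV (A - B) (A + B)ᴴ
  have h2 := norm_trace_star_mul_mul_le hV (A + B) (A - B)ᴴ
  simp only [conjTranspose_conjTranspose, hC, hD] at h1 h2
  have : 2 * traceNorm (A * Aᴴ - B * Bᴴ) ≤ 4 * √(1 - r ^ 2) := calc
    2 * traceNorm (A * Aᴴ - B * Bᴴ)
        = ‖(star V * ((2 : ℂ) • (A * Aᴴ - B * Bᴴ))).trace‖ := by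
      rw [Matrix.mul_smul, trace_smul, hVtr, smul_eq_mul, norm_mul, Complex.norm_real,
        Real.norm_of_nonneg (traceNorm_nonneg _)]
      norm_num
    _ ≤ ‖(star V * (A - B) * (A + B)ᴴ).trace‖ +
          ‖(star V * (A + B) * (A - B)ᴴ).trace‖ := by
      rw [← hCD, mul_add, trace_add, mul_assoc, mul_assoc]
      exact norm_add_le _ _
    _ ≤ 4 * √(1 - r ^ 2) := by linarith
  linarith

lemma traceNorm_sub_le_two_mul_sqrt_one_sub_sq {ρ τ : Matrix n n ℂ}
    (hρ : ρ.PosSemidef) (hρ1 : ρ.trace = 1) (hτ : τ.PosSemidef) (hτ1 : τ.trace = 1) :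
    traceNorm (ρ - τ) ≤ 2 * √(1 - traceNorm (msqrt ρ * msqrt τ) ^ 2) := by
  obtain ⟨W, hW, hWr⟩ := exists_unitary_trace_star_mul_eq_traceNorm (msqrt ρ * msqrt τ)
  have hA : (msqrt ρ)ᴴ = msqrt ρ := hρ.posSemidef_msqrt.1
  have hWW : star W * W = 1 := (mem_unitaryGroup_iff').mp hW
  have hBB : msqrt τ * star W * (msqrt τ * star W)ᴴ = τ := by
    rw [conjTranspose_mul, ← star_eq_conjTranspose (star W), star_star, mul_assoc,
      ← mul_assoc (star W), hWW, one_mul, hτ.posSemidef_msqrt.1, hτ.msqrt_mul_msqrt]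
  have hB : (msqrt τ * star W)ᴴ * (msqrt τ * star W) = W * τ * star W := by
    rw [conjTranspose_mul, ← star_eq_conjTranspose (star W), star_star, mul_assoc,
      ← mul_assoc (msqrt τ)ᴴ, hτ.conjTranspose_msqrt_mul_msqrt, mul_assoc]
  have := traceNorm_mul_conjTranspose_sub_le (A := msqrt ρ) (B := msqrt τ * star W)
    (by rw [hρ.conjTranspose_msqrt_mul_msqrt, hρ1])
    (by rw [hB, trace_mul_cycle, hWW, one_mul, hτ1])
    (by rw [hA, ← mul_assoc, trace_mul_comm, hWr])
  rwa [hA, hρ.msqrt_mul_msqrt, hBB] at this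

lemma traceNorm_sub_inv_smul_le {ρ ρ' : Matrix n n ℂ} (hρ : IsState ρ) (hρ' : ρ'.PosSemidef)
    {t : ℝ} (ht0 : 0 < t) (ht1 : t ≤ 1) (htr : ρ'.trace = t) :
    traceNorm (ρ - ((t⁻¹ : ℝ) : ℂ) • ρ') ≤
      2 * √(1 - traceNorm (msqrt ρ * msqrt ρ') ^ 2) := by
  have hτ : (((t⁻¹ : ℝ) : ℂ) • ρ').PosSemidef :=
    hρ'.smul (by exact_mod_cast (inv_pos.mpr ht0).le)
  have hτ1 : (((t⁻¹ : ℝ) : ℂ) • ρ').trace = 1 := by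
    rw [trace_smul, htr, smul_eq_mul, ← Complex.ofReal_mul, inv_mul_cancel₀ ht0.ne',
      Complex.ofReal_one]
  refine (traceNorm_sub_le_two_mul_sqrt_one_sub_sq hρ.1 hρ.2 hτ hτ1).trans ?_
  rw [hρ'.msqrt_real_smul (inv_pos.mpr ht0).le, Matrix.mul_smul,
    traceNorm_real_smul _ (Real.sqrt_nonneg _), mul_pow, Real.sq_sqrt (inv_pos.mpr ht0).le]
  gcongr
  exact le_mul_of_one_le_left (sq_nonneg _) ((one_le_inv₀ ht0).mpr ht1)

end Matrix

lemma loe_real_smul_of_loe {n : Type*} [Fintype n] {A σ : Matrix n n ℂ} {c a b : ℝ}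
    (hσ : σ.PosSemidef) (hc : 0 ≤ c) (ha : 0 ≤ a) (hab : a ≤ b)
    (h : loe A ((c : ℂ) • σ)) :
    loe ((a : ℂ) • A) (((c * b : ℝ) : ℂ) • σ) := by
  have hsplit : ((c * b : ℝ) : ℂ) • σ - (a : ℂ) • A =
      ((c * (b - a) : ℝ) : ℂ) • σ + (a : ℂ) • ((c : ℂ) • σ - A) := by
    push_cast
    module
  rw [loe, hsplit]
  exact (hσ.smul (by exact_mod_cast mul_nonneg hc (sub_nonneg.mpr hab))).add
    (h.smul (by exact_mod_cast ha))

lemma gFid_of_trace_eq_one {n : Type*} [Fintype n] [DecidableEq n] {ρ : Matrix n n ℂ}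
    (hρ : ρ.trace = 1) (ρ' : Matrix n n ℂ) :
    gFid ρ ρ' = traceNorm (msqrt ρ * msqrt ρ') ^ 2 := by
  simp [gFid, hρ]

theorem stmt5 {n : Type*} [Fintype n] [DecidableEq n] (ρ ρ' σ : Matrix n n ℂ)
    (hρ : IsState ρ) (hσ : IsState σ) (hρ' : ρ'.PosSemidef) (hρ't : ρ'.trace.re ≤ 1)
    (ε lam : ℝ) (hε0 : 0 ≤ ε) (hε1 : ε < 1)
    (hP : pDist ρ ρ' ≤ ε) (hD : loe ρ' ((((2 : ℝ) ^ lam : ℝ) : ℂ) • σ)) :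
    traceNorm (ρ - (ρ'.trace)⁻¹ • ρ') / 2 ≤ ε ∧
    loe ((ρ'.trace)⁻¹ • ρ')
      ((((2 : ℝ) ^ (lam + Real.logb 2 (1 / (1 - ε))) : ℝ) : ℂ) • σ) := by
  set t := ρ'.trace.re
  set F := traceNorm (msqrt ρ * msqrt ρ')
  have hFε : 1 - F ^ 2 ≤ ε ^ 2 := by
    simpa [pDist, gFid_of_trace_eq_one hρ.2] using (Real.sqrt_le_iff.mp hP).2
  have hFt : F ≤ √t := by
    simpa [hρ.2] using traceNorm_msqrt_mul_msqrt_le hρ.1 hρ'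
  have htε : 1 - ε ≤ t := by
    nlinarith [Real.sq_sqrt hρ'.trace_re_nonneg, traceNorm_nonneg (msqrt ρ * msqrt ρ')]
  have ht0 : 0 < t := by linarith
  have hτ : ρ'.trace⁻¹ • ρ' = ((t⁻¹ : ℝ) : ℂ) • ρ' := by
    rw [Complex.ofReal_inv, hρ'.ofReal_trace_re]
  rw [hτ]
  constructor
  · have := traceNorm_sub_inv_smul_le hρ hρ' ht0 hρ't hρ'.ofReal_trace_re.symm
    linarith [Real.sqrt_le_iff.mpr ⟨hε0, hFε⟩]
  · rw [Real.rpow_add two_pos, Real.rpow_logb two_pos (by norm_num) (by simp; linarith)]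
    refine loe_real_smul_of_loe hσ.1 (by positivity) (inv_pos.mpr ht0).le ?_ hD
    rw [one_div]
    exact inv_anti₀ (by linarith) htε

end
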